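/- arXiv:2402.00062 — 3 statements merged into one kernel-verified Lean document; each statement's English description precedes it below -/
import Mathlib

section
/- Let α ∈ (1,2), δ ∈ (0,1), and let f : [-1,0] → ℝ be of class C^{α,δ}_{(hor)}. Set c := c₂/(α(α−1)), where c₂ := lim_{z→0⁻}|z|^{2−α}f″(z), and define f₁(z) := f(z) − c|z|^{α}. Then f₁ is once continuously differentiable on [-1,0] and five times continuously differentiable on [-1,0), and for every δ′ ∈ (0,δ) and every 2 ≤ j ≤ 5 the function z ↦ |z|^{j−α−δ′} f₁^{(j)}(z) extends continuously to [-1,0] with value 0 at z = 0. In particular f admits the decomposition f(z) = c|z|^{α} + f₁(z) with f₁ of Hölder class α + δ′ for every δ′ < δ. -/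
/-!
Write `D_j = (-1)^j α(α-1)⋯(α-j+1)`, so that `(d/dz)^j |z|^α = D_j |z|^(α-j)`. The Hölder
extensions `g_j` of `|z|^(j-α) f⁽ʲ⁾` satisfy `g_(j+1)(0) = (j-α) g_j(0)`: if `|z|^q F → A` and
`|z|^(q+1) F' → L` as `z → 0⁻`, then `|z| (|z|^q F)' → L - qA`, and a function with a limit at `0⁻`
cannot have `|z| h'(z)` tend to a nonzero limit (mean value theorem on `[z, z/2]`). Starting from
`g_2(0) = c₂ = c D_2` this gives `g_j(0) = c D_j`, the weighted `j`-th derivative of `c|z|^α`.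
Hence `|z|^(j-α) f₁⁽ʲ⁾ = g_j - g_j(0) = O(|z|^δ)`, and after division by `|z|^δ'` it still tends
to `0`.
-/

open Real Set Filter Topology

/-- `f : [-1,0] → ℝ` is of class `C^{α,δ}_{(hor)}`: five times continuously
differentiable on `[-1,0)`, once continuously differentiable on `[-1,0]`, and
for each `2 ≤ j ≤ 5` the function `z ↦ |z|^{j−α} f^{(j)}(z)` extends to a
`δ`-Hölder continuous function on `[-1,0]` (here `|z| = −z`). -/
def IsChor (α δ : ℝ) (f : ℝ → ℝ) : Prop :=
  ContDiffOn ℝ 5 f (Set.Ico (-1:ℝ) 0) ∧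
  ContDiffOn ℝ 1 f (Set.Icc (-1:ℝ) 0) ∧
  ∀ j : ℕ, 2 ≤ j → j ≤ 5 →
    ∃ g : ℝ → ℝ,
      (∃ C : NNReal, HolderOnWith C δ.toNNReal g (Set.Icc (-1:ℝ) 0)) ∧
      ∀ z ∈ Set.Ico (-1:ℝ) 0,
        g z = (-z) ^ ((j : ℝ) - α) * iteratedDerivWithin j f (Set.Ico (-1:ℝ) 0) z

theorem eq_zero_of_tendsto_of_tendsto_neg_mul_deriv {h h' : ℝ → ℝ} {A M : ℝ}
    (hd : ∀ᶠ z in 𝓝[<] 0, HasDerivAt h (h' z) z) (hA : Tendsto h (𝓝[<] 0) (𝓝 A))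
    (hM : Tendsto (fun z => -z * h' z) (𝓝[<] 0) (𝓝 M)) : M = 0 := by
  obtain ⟨a, ha, had⟩ := (mem_nhdsLT_iff_exists_Ioo_subset' neg_one_lt_zero).1 hd
  have hmvt : ∀ z ∈ Ioo a 0, ∃ ξ ∈ Ioo z (z / 2), h' ξ = (h (z / 2) - h z) / (z / 2 - z) := by
    intro z hz
    have hsub : Icc z (z / 2) ⊆ Ioo a 0 := Icc_subset_Ioo hz.1 (by linarith [hz.2])
    exact exists_hasDerivAt_eq_slope h h' (by linarith [hz.2])
      (fun x hx => (had (hsub hx)).continuousAt.continuousWithinAt)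
      (fun x hx => had (hsub (Ioo_subset_Icc_self hx)))
  choose! ξ hξ hξeq using hmvt
  have hnear : ∀ᶠ z in 𝓝[<] (0 : ℝ), z ∈ Ioo a 0 := Ioo_mem_nhdsLT ha
  have hhalf : Tendsto (fun z : ℝ => z / 2) (𝓝[<] 0) (𝓝[<] 0) := by
    refine tendsto_nhdsWithin_of_tendsto_nhds_of_eventually_within _ ?_ ?_
    · simpa using ((continuous_id.div_const (2 : ℝ)).tendsto 0).mono_left nhdsWithin_le_nhds
    · filter_upwards [self_mem_nhdsWithin] with z hz
      using div_neg_of_neg_of_pos hz (two_pos (α := ℝ))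
  have hξlim : Tendsto ξ (𝓝[<] 0) (𝓝[<] 0) := by
    refine tendsto_nhdsWithin_of_tendsto_nhds_of_eventually_within _ ?_ ?_
    · refine tendsto_of_tendsto_of_tendsto_of_le_of_le' (nhdsWithin_le_nhds (s := Iio 0))
        (tendsto_nhds_of_tendsto_nhdsWithin hhalf) ?_ ?_
      · filter_upwards [hnear] with z hz using (hξ z hz).1.le
      · filter_upwards [hnear] with z hz using (hξ z hz).2.le
    · filter_upwards [hnear] with z hz using show ξ z < 0 by linarith [(hξ z hz).2, hz.2]
  have hzero : Tendsto (fun z => -ξ z * h' (ξ z)) (𝓝[<] 0) (𝓝 0) := by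
    have hdiff : Tendsto (fun z => h (z / 2) - h z) (𝓝[<] 0) (𝓝 0) := by
      simpa using (hA.comp hhalf).sub hA
    refine squeeze_zero_norm' ?_ (by simpa using hdiff.norm.const_mul 2)
    filter_upwards [hnear] with z hz
    obtain ⟨hzξ, hξz⟩ := hξ z hz
    have hz0 : z < 0 := hz.2
    have hratio : |2 * (ξ z / z)| ≤ 2 := by
      have h0 : 0 ≤ ξ z / z := div_nonneg_of_nonpos (by linarith) hz0.le
      have h1 : ξ z / z ≤ 1 := (div_le_one_of_neg hz0).2 hzξ.le
      rw [abs_le]; constructor <;> linarith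
    rw [hξeq z hz, show -ξ z * ((h (z / 2) - h z) / (z / 2 - z))
        = (h (z / 2) - h z) * (2 * (ξ z / z)) by field_simp; ring, norm_mul, Real.norm_eq_abs,
      Real.norm_eq_abs]
    exact (mul_le_mul_of_nonneg_left hratio (abs_nonneg _)).trans_eq (mul_comm _ _)
  exact tendsto_nhds_unique (hM.comp hξlim) hzero

theorem eq_mul_of_tendsto_rpow_mul_of_tendsto_rpow_succ_mul_deriv {F G : ℝ → ℝ} {q A L : ℝ}
    (hd : ∀ᶠ z in 𝓝[<] 0, HasDerivAt F (G z) z)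
    (hA : Tendsto (fun z => (-z) ^ q * F z) (𝓝[<] 0) (𝓝 A))
    (hL : Tendsto (fun z => (-z) ^ (q + 1) * G z) (𝓝[<] 0) (𝓝 L)) : L = q * A := by
  have hderiv : ∀ᶠ z in 𝓝[<] (0 : ℝ), HasDerivAt (fun z => (-z) ^ q * F z)
      (-1 * q * (-z) ^ (q - 1) * F z + (-z) ^ q * G z) z := by
    filter_upwards [hd, self_mem_nhdsWithin] with z hFz hz
    exact ((hasDerivAt_neg z).rpow_const (Or.inl (neg_pos.2 hz).ne')).mul hFz
  have hweighted : Tendsto (fun z => -z * (-1 * q * (-z) ^ (q - 1) * F z + (-z) ^ q * G z))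
      (𝓝[<] 0) (𝓝 (L - q * A)) := by
    refine (hL.sub (hA.const_mul q)).congr' ?_
    filter_upwards [self_mem_nhdsWithin] with z hz
    have hz0 : z ≠ 0 := (mem_Iio.1 hz).ne
    have hpos : 0 < -z := neg_pos.2 hz
    rw [rpow_add hpos, rpow_sub hpos, rpow_one]
    field_simp
    ring
  linarith [eq_zero_of_tendsto_of_tendsto_neg_mul_deriv hderiv hA hweighted]

theorem contDiffAt_neg_rpow {n : ℕ∞} {p z : ℝ} (hz : z < 0) :
    ContDiffAt ℝ n (fun x : ℝ => (-x) ^ p) z :=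
  (contDiffAt_rpow_const_of_ne (by linarith)).comp z contDiff_neg.contDiffAt

theorem iteratedDerivWithin_neg_rpow {s : Set ℝ} (hs : UniqueDiffOn ℝ s) (p : ℝ) (k : ℕ)
    {z : ℝ} (hzs : z ∈ s) (hz : z < 0) :
    iteratedDerivWithin k (fun x : ℝ => (-x) ^ p) s z
      = (-1) ^ k * (descPochhammer ℝ k).eval p * (-z) ^ (p - k) := by
  rw [iteratedDerivWithin_eq_iteratedDeriv hs (contDiffAt_neg_rpow hz) hzs,
    iteratedDeriv_comp_neg (f := fun x : ℝ => x ^ p), iteratedDeriv_eq_iterate,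
    iter_deriv_rpow_const, smul_eq_mul, mul_assoc]

theorem ContDiffOn.hasDerivAt_iteratedDerivWithin {f : ℝ → ℝ} {s : Set ℝ} {n : WithTop ℕ∞}
    (hf : ContDiffOn ℝ n f s) (hs : UniqueDiffOn ℝ s) {k : ℕ} (hk : k < n) {x : ℝ}
    (hx : s ∈ 𝓝 x) :
    HasDerivAt (iteratedDerivWithin k f s) (iteratedDerivWithin (k + 1) f s x) x := by
  rw [iteratedDerivWithin_succ]
  exact ((hf.differentiableOn_iteratedDerivWithin hk hs) x (mem_of_mem_nhds hx)).hasDerivWithinAt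
    |>.hasDerivAt hx

theorem HolderOnWith.continuousOn_neg_rpow_mul_sub {g : ℝ → ℝ} {C r : NNReal} {a ε : ℝ}
    (hg : HolderOnWith C r g (Icc a 0)) (hε : 0 < ε) (hεr : ε < r) :
    ContinuousOn (fun z => (-z) ^ (-ε) * (g z - g 0)) (Icc a 0) := by
  intro x hx
  rcases hx.2.lt_or_eq with hx0 | rfl
  · exact ((contDiffAt_neg_rpow (n := 0) hx0).continuousAt.continuousWithinAt).mul
      ((hg.continuousOn (hε.trans hεr) x hx).sub continuousWithinAt_const)
  · have hbound : Tendsto (fun z : ℝ => C * (-z) ^ ((r : ℝ) - ε)) (𝓝 0) (𝓝 0) := by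
      have := ((continuous_neg.rpow_const fun _ => Or.inr (sub_pos.2 hεr).le).tendsto
        (0 : ℝ)).const_mul (C : ℝ)
      simpa [Real.zero_rpow (sub_pos.2 hεr).ne'] using this
    rw [ContinuousWithinAt, sub_self, mul_zero]
    refine squeeze_zero_norm' ?_ (hbound.mono_left nhdsWithin_le_nhds)
    filter_upwards [self_mem_nhdsWithin] with z hz
    have hz0 : 0 ≤ -z := neg_nonneg.2 hz.2
    have hdist : |g z - g 0| ≤ C * (-z) ^ (r : ℝ) := by
      simpa [Real.dist_eq, abs_of_nonpos hz.2] using hg.dist_le hz ⟨hx.1, le_rfl⟩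
    calc ‖(-z) ^ (-ε) * (g z - g 0)‖ = (-z) ^ (-ε) * |g z - g 0| := by
          rw [norm_mul, Real.norm_eq_abs, Real.norm_eq_abs, abs_of_nonneg (rpow_nonneg hz0 _)]
      _ ≤ (-z) ^ (-ε) * (C * (-z) ^ (r : ℝ)) := by gcongr
      _ = C * (-z) ^ ((r : ℝ) - ε) := by
          rw [sub_eq_neg_add, rpow_add' hz0 (by linarith)]; ring

theorem iteratedDerivWithin_sub_const_mul_neg_rpow {f : ℝ → ℝ} {s : Set ℝ}
    (hs : UniqueDiffOn ℝ s) {k : ℕ} {z : ℝ} (hzs : z ∈ s) (hz : z < 0)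
    (hf : ContDiffWithinAt ℝ k f s z) (c p : ℝ) :
    iteratedDerivWithin k (fun w => f w - c * (-w) ^ p) s z = iteratedDerivWithin k f s z
      - c * ((-1) ^ k * (descPochhammer ℝ k).eval p * (-z) ^ (p - k)) := by
  have hpow : ContDiffWithinAt ℝ k (fun w : ℝ => c * (-w) ^ p) s z :=
    (contDiffAt_const.mul (contDiffAt_neg_rpow hz)).contDiffWithinAt
  show iteratedDerivWithin k (f - fun w => c * (-w) ^ p) s z = _
  rw [iteratedDerivWithin_sub hzs hs hf hpow, iteratedDerivWithin_const_mul hzs hs c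
    (contDiffAt_neg_rpow hz).contDiffWithinAt, iteratedDerivWithin_neg_rpow hs p k hzs hz]

theorem HolderOnWith.tendsto_nhdsLT_of_eqOn {g φ : ℝ → ℝ} {C r : NNReal} {a : ℝ}
    (hg : HolderOnWith C r g (Icc a 0)) (hr : 0 < r) (ha : a < 0) (h : EqOn g φ (Ico a 0)) :
    Tendsto φ (𝓝[<] 0) (𝓝 (g 0)) :=
  ((hg.continuousOn hr 0 ⟨ha.le, le_rfl⟩).mono_of_mem_nhdsWithin (Icc_mem_nhdsLT ha)).congr'
    (eventuallyEq_of_mem (Ico_mem_nhdsLT ha) h)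

namespace IsChor

variable {α δ : ℝ} {f : ℝ → ℝ}

theorem tendsto_rpow_mul_iteratedDerivWithin (hf : IsChor α δ f) (hδ : 0 < δ) {c : ℝ}
    (h2 : Tendsto (fun z => (-z) ^ ((2 : ℝ) - α) * iteratedDerivWithin 2 f (Ico (-1) 0) z)
      (𝓝[<] 0) (𝓝 (c * (α * (α - 1))))) {j : ℕ} (hj2 : 2 ≤ j) (hj5 : j ≤ 5) :
    Tendsto (fun z => (-z) ^ ((j : ℝ) - α) * iteratedDerivWithin j f (Ico (-1) 0) z) (𝓝[<] 0)
      (𝓝 (c * ((-1) ^ j * (descPochhammer ℝ j).eval α))) := by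
  induction j, hj2 using Nat.le_induction with
  | base => simpa [descPochhammer_succ_eval] using h2
  | succ j hj2 ih =>
    obtain ⟨g, ⟨C, hg⟩, hgeq⟩ := hf.2.2 (j + 1) (by omega) hj5
    have hL := hg.tendsto_nhdsLT_of_eqOn (Real.toNNReal_pos.2 hδ) neg_one_lt_zero
      (fun z hz => hgeq z hz)
    have hderiv : ∀ᶠ z in 𝓝[<] (0 : ℝ), HasDerivAt (iteratedDerivWithin j f (Ico (-1) 0))
        (iteratedDerivWithin (j + 1) f (Ico (-1) 0) z) z := by
      filter_upwards [Ioo_mem_nhdsLT neg_one_lt_zero] with z hz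
      exact hf.1.hasDerivAt_iteratedDerivWithin (uniqueDiffOn_Ico _ _)
        (by exact_mod_cast (show j < 5 by omega)) (Ico_mem_nhds hz.1 hz.2)
    have hrec := eq_mul_of_tendsto_rpow_mul_of_tendsto_rpow_succ_mul_deriv hderiv (ih (by omega))
      (by rwa [show (j : ℝ) - α + 1 = ((j + 1 : ℕ) : ℝ) - α by push_cast; ring])
    convert hL using 2
    rw [hrec, descPochhammer_succ_eval, pow_succ]
    ring

end IsChor

theorem stmt10_general (α δ : ℝ) (hα : α ∈ Set.Ioo (1:ℝ) 2)
    (f : ℝ → ℝ) (hf : IsChor α δ f) (c₂ : ℝ)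
    (hc₂ : Filter.Tendsto
      (fun z => (-z) ^ ((2 : ℝ) - α) * iteratedDerivWithin 2 f (Set.Ico (-1:ℝ) 0) z)
      (nhdsWithin 0 (Set.Iio 0)) (nhds c₂)) :
    ContDiffOn ℝ 1 (fun z => f z - c₂ / (α * (α - 1)) * (-z) ^ α) (Set.Icc (-1:ℝ) 0) ∧
    ContDiffOn ℝ 5 (fun z => f z - c₂ / (α * (α - 1)) * (-z) ^ α) (Set.Ico (-1:ℝ) 0) ∧
    ∀ δ' ∈ Set.Ioo (0:ℝ) δ, ∀ j : ℕ, 2 ≤ j → j ≤ 5 →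
      ∃ g : ℝ → ℝ, ContinuousOn g (Set.Icc (-1:ℝ) 0) ∧ g 0 = 0 ∧
        ∀ z ∈ Set.Ico (-1:ℝ) 0,
          g z = (-z) ^ ((j : ℝ) - α - δ') *
            iteratedDerivWithin j
              (fun w => f w - c₂ / (α * (α - 1)) * (-w) ^ α)
              (Set.Ico (-1:ℝ) 0) z := by
  set c := c₂ / (α * (α - 1))
  have hpow : ContDiff ℝ 1 (fun z : ℝ => (-z) ^ α) :=
    (contDiff_rpow_const_of_le (by exact_mod_cast hα.1.le)).comp contDiff_neg
  refine ⟨hf.2.1.sub (contDiff_const.mul hpow).contDiffOn,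
    hf.1.sub fun z hz => (contDiffAt_const.mul (contDiffAt_neg_rpow hz.2)).contDiffWithinAt, ?_⟩
  rintro δ' ⟨hδ'0, hδ'δ⟩ j hj2 hj5
  obtain ⟨g, ⟨C, hg⟩, hgeq⟩ := hf.2.2 j hj2 hj5
  have hr : δ' < δ.toNNReal := by rw [Real.coe_toNNReal _ (by linarith)]; exact hδ'δ
  have hc : c * (α * (α - 1)) = c₂ := div_mul_cancel₀ _ (by nlinarith [hα.1])
  have hg0 : g 0 = c * ((-1) ^ j * (descPochhammer ℝ j).eval α) :=
    tendsto_nhds_unique (hg.tendsto_nhdsLT_of_eqOn (hδ'0.trans hr) neg_one_lt_zero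
      (fun z hz => hgeq z hz))
      (hf.tendsto_rpow_mul_iteratedDerivWithin (hδ'0.trans hδ'δ) (hc ▸ hc₂) hj2 hj5)
  refine ⟨fun z => (-z) ^ (-δ') * (g z - g 0), hg.continuousOn_neg_rpow_mul_sub hδ'0 hr,
    by simp, fun z hz => ?_⟩
  have hz0 : 0 < -z := neg_pos.2 hz.2
  show (-z) ^ (-δ') * (g z - g 0) = _
  rw [iteratedDerivWithin_sub_const_mul_neg_rpow (uniqueDiffOn_Ico _ _) hz hz.2
    ((hf.1 z hz).of_le (by exact_mod_cast hj5)), hgeq z hz, hg0]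
  have hinv : (-z) ^ ((j : ℝ) - α) * (-z) ^ (α - j) = 1 := by
    rw [← rpow_add hz0]; simp
  simp only [sub_eq_neg_add _ δ', rpow_add hz0]
  linear_combination (-z) ^ (-δ') * c * ((-1) ^ j * (descPochhammer ℝ j).eval α) * hinv

/-- Decomposition lemma: for `f ∈ C^{α,δ}_{(hor)}` with
`c₂ = lim_{z→0⁻} |z|^{2−α} f″(z)` and `c = c₂/(α(α−1))`, the remainder
`f₁(z) = f(z) − c|z|^α` is `C¹` on `[-1,0]`, `C⁵` on `[-1,0)`, and for every
`δ′ ∈ (0,δ)` and `2 ≤ j ≤ 5` the function `z ↦ |z|^{j−α−δ′} f₁^{(j)}(z)`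
extends continuously to `[-1,0]` with value `0` at `z = 0`; in particular
`f(z) = c|z|^α + f₁(z)` with `f₁` of Hölder class `α + δ′` for every `δ′ < δ`. -/
theorem stmt10 (α δ : ℝ) (hα : α ∈ Set.Ioo (1:ℝ) 2) (hδ : δ ∈ Set.Ioo (0:ℝ) 1)
    (f : ℝ → ℝ) (hf : IsChor α δ f) (c₂ : ℝ)
    (hc₂ : Filter.Tendsto
      (fun z => (-z) ^ ((2 : ℝ) - α) * iteratedDerivWithin 2 f (Set.Ico (-1:ℝ) 0) z)
      (nhdsWithin 0 (Set.Iio 0)) (nhds c₂)) :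
    ContDiffOn ℝ 1 (fun z => f z - c₂ / (α * (α - 1)) * (-z) ^ α) (Set.Icc (-1:ℝ) 0) ∧
    ContDiffOn ℝ 5 (fun z => f z - c₂ / (α * (α - 1)) * (-z) ^ α) (Set.Ico (-1:ℝ) 0) ∧
    ∀ δ' ∈ Set.Ioo (0:ℝ) δ, ∀ j : ℕ, 2 ≤ j → j ≤ 5 →
      ∃ g : ℝ → ℝ, ContinuousOn g (Set.Icc (-1:ℝ) 0) ∧ g 0 = 0 ∧
        ∀ z ∈ Set.Ico (-1:ℝ) 0,
          g z = (-z) ^ ((j : ℝ) - α - δ') *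
            iteratedDerivWithin j
              (fun w => f w - c₂ / (α * (α - 1)) * (-w) ^ α)
              (Set.Ico (-1:ℝ) 0) z :=
  stmt10_general α δ hα f hf c₂ hc₂
end

section
/- Assume the self-similar ODE system, and assume in addition that lim_{ẑ→0⁻} μ(ẑ) = k²/(1+k²). Then for all ẑ ∈ [-1,0): ν(ẑ) ≤ −1/2; 1/2 ≤ λ(ẑ) ≤ (1/2)|ẑ|^{−k²}; (1/2)(1−|ẑ|) ≤ r(ẑ) ≤ (1/(2q_k))(1−|ẑ|^{q_k}); 1 ≤ Ω(ẑ)² ≤ |ẑ|^{−k²}; and 0 ≤ m(ẑ) ≤ k². -/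
/-!
Everything follows from monotonicity once `λ > 0` and `ψ > 0` are known. By (2) and (10),
`λ′ = -(rψ² + 2kλψ + k²λ/ẑ)`, and `(r²λ′)′ = r²λ(k + ẑψ)²/ẑ² - (2kψ + k²/ẑ) r²λ′`; as `r(-1) = 0`,
an integrating factor shows `r²λ′ ≥ 0` as long as `λ ≥ 0`, so `λ` cannot leave `[1/2, ∞)`.
Likewise `(r²(ẑψ + k/2))′ = r²ψ`, so `ẑψ + k/2 ≥ 0`, hence `ψ′ ≥ 0`, as long as `ψ > 0`, and
`ψ ≥ k/2` throughout. Then `-ẑλ′ ≤ k²λ` and `-ẑ(Ω²)′ ≤ k²Ω²` (the latter from (5)) give the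
`|ẑ|^{-k²}` bounds, `r′ = λ` gives the bounds on `r` and then on `ν = ẑλ - r`, `Ω²/λ` is
nondecreasing by (5), and `m` is nondecreasing by (7) since `1 - μ = -4νλ/Ω² ≥ 0`; finally
`m ≤ μ r / 2` near `ẑ = 0` with `r ≤ 1/(2q_k)` gives `m ≤ k²`.
-/

open Real Set Filter

/-- The `k`-self-similar Einstein-scalar-field ODE system in the interior
region, for the self-similar quantities `r, ν, λ, Ω, m` and the scalar-field
derivative `ψ = φ̊′` as functions of the self-similar coordinate `ẑ ∈ [-1,0)`
(with `|ẑ| = −ẑ` and `μ = 2m/r`), together with the algebraic identities and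
the initial conditions at the axis `ẑ = −1`. -/
structure SSS (k : ℝ) (r ν lam Ω m ψ : ℝ → ℝ) : Prop where
  k_pos : 0 < k
  k_small : k ^ 2 < 1 / 3
  cont_r : ContinuousOn r (Set.Ico (-1 : ℝ) 0)
  cont_ν : ContinuousOn ν (Set.Ico (-1 : ℝ) 0)
  cont_lam : ContinuousOn lam (Set.Ico (-1 : ℝ) 0)
  cont_Ω : ContinuousOn Ω (Set.Ico (-1 : ℝ) 0)
  cont_m : ContinuousOn m (Set.Ico (-1 : ℝ) 0)
  cont_ψ : ContinuousOn ψ (Set.Ico (-1 : ℝ) 0)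
  diff_r : ∀ z ∈ Set.Ioo (-1 : ℝ) 0, DifferentiableAt ℝ r z
  diff_ν : ∀ z ∈ Set.Ioo (-1 : ℝ) 0, DifferentiableAt ℝ ν z
  diff_lam : ∀ z ∈ Set.Ioo (-1 : ℝ) 0, DifferentiableAt ℝ lam z
  diff_Ω : ∀ z ∈ Set.Ioo (-1 : ℝ) 0, DifferentiableAt ℝ Ω z
  diff_m : ∀ z ∈ Set.Ioo (-1 : ℝ) 0, DifferentiableAt ℝ m z
  diff_ψ : ∀ z ∈ Set.Ioo (-1 : ℝ) 0, DifferentiableAt ℝ ψ z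
  contd_r : ContinuousOn (deriv r) (Set.Ioo (-1 : ℝ) 0)
  contd_ν : ContinuousOn (deriv ν) (Set.Ioo (-1 : ℝ) 0)
  contd_lam : ContinuousOn (deriv lam) (Set.Ioo (-1 : ℝ) 0)
  contd_Ω : ContinuousOn (deriv Ω) (Set.Ioo (-1 : ℝ) 0)
  contd_m : ContinuousOn (deriv m) (Set.Ioo (-1 : ℝ) 0)
  contd_ψ : ContinuousOn (deriv ψ) (Set.Ioo (-1 : ℝ) 0)
  r_pos : ∀ z ∈ Set.Ioo (-1 : ℝ) 0, 0 < r z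
  Ω_pos : ∀ z ∈ Set.Ioo (-1 : ℝ) 0, 0 < Ω z
  eq1 : ∀ z ∈ Set.Ioo (-1 : ℝ) 0, deriv r z = lam z
  eq2 : ∀ z ∈ Set.Ioo (-1 : ℝ) 0,
    r z * z * deriv lam z = -(ν z * lam z) - (1/4) * Ω z ^ 2
  eq3 : ∀ z ∈ Set.Ioo (-1 : ℝ) 0,
    r z * deriv ν z = -(ν z * lam z) - (1/4) * Ω z ^ 2
  eq4 : ∀ z ∈ Set.Ioo (-1 : ℝ) 0,
    2 * (Ω z)⁻¹ * ν z * z * deriv Ω z = z * deriv ν z + r z * (z * ψ z + k) ^ 2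
  eq5 : ∀ z ∈ Set.Ioo (-1 : ℝ) 0,
    2 * (Ω z)⁻¹ * lam z * deriv Ω z = deriv lam z + r z * ψ z ^ 2
  eq6 : ∀ z ∈ Set.Ioo (-1 : ℝ) 0,
    r z * z * deriv ψ z = -2 * lam z * z * ψ z - k * lam z
  eq7 : ∀ z ∈ Set.Ioo (-1 : ℝ) 0,
    2 * lam z * deriv m z = (1 - 2 * m z / r z) * r z ^ 2 * ψ z ^ 2
  eq8 : ∀ z ∈ Set.Ioo (-1 : ℝ) 0,
    2 * ν z * z * deriv m z
      = 2 * ν z * m z + (1 - 2 * m z / r z) * r z ^ 2 * (z * ψ z + k) ^ 2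
  alg9 : ∀ z ∈ Set.Ioo (-1 : ℝ) 0, ν z + r z = z * lam z
  alg10 : ∀ z ∈ Set.Ioo (-1 : ℝ) 0,
    (1/4) * Ω z ^ 2 + ν z * lam z
      = r z ^ 2 * z * ψ z ^ 2 + 2 * k * z * lam z * r z * ψ z + k ^ 2 * r z * lam z
  alg11 : ∀ z ∈ Set.Ioo (-1 : ℝ) 0, m z = (r z / 2) * (1 + 4 * ν z * lam z / Ω z ^ 2)
  init_r : r (-1) = 0
  init_ν : ν (-1) = -(1/2)
  init_lam : lam (-1) = 1/2
  init_Ω : Ω (-1) = 1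
  init_m : m (-1) = 0
  init_ψ : ψ (-1) = k / 2

open Topology MeasureTheory

theorem le_of_hasDerivAt_nonneg {f f' : ℝ → ℝ} {a b : ℝ} (hab : a ≤ b)
    (hf : ContinuousOn f (Icc a b)) (hderiv : ∀ x ∈ Ioo a b, HasDerivAt f (f' x) x)
    (hnonneg : ∀ x ∈ Ioo a b, 0 ≤ f' x) : f a ≤ f b := by
  refine monotoneOn_of_hasDerivWithinAt_nonneg (convex_Icc a b) hf (f' := f') ?_ ?_
    (left_mem_Icc.2 hab) (right_mem_Icc.2 hab) hab
  · rw [interior_Icc]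
    exact fun x hx => (hderiv x hx).hasDerivWithinAt
  · rwa [interior_Icc]

theorem ContinuousOn.forall_pos_of_forall_Ioo_pos {f : ℝ → ℝ} {a b : ℝ}
    (hf : ContinuousOn f (Ico a b))
    (hstep : ∀ c ∈ Ico a b, (∀ x ∈ Ioo a c, 0 < f x) → 0 < f c) :
    ∀ x ∈ Ico a b, 0 < f x := by
  by_contra! ⟨x, hx, hfx⟩
  set S := {y ∈ Icc a x | f y ≤ 0}
  have hSx : Icc a x ⊆ Ico a b := Icc_subset_Ico_right hx.2
  have hS : IsClosed S :=
    (hf.mono hSx).preimage_isClosed_of_isClosed isClosed_Icc isClosed_Iic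
  have hbdd : BddBelow S := ⟨a, fun y hy => hy.1.1⟩
  have hc : sInf S ∈ S := hS.csInf_mem ⟨x, ⟨hx.1, le_rfl⟩, hfx⟩ hbdd
  refine (hstep (sInf S) (hSx hc.1) fun y hy => ?_).not_ge hc.2
  by_contra! hfy
  exact (csInf_le hbdd ⟨⟨hy.1.le, hy.2.le.trans hc.1.2⟩, hfy⟩).not_gt hy.2

theorem nonneg_of_hasDerivAt_ge_mul {y y' β : ℝ → ℝ} {a b : ℝ} (hab : a ≤ b)
    (hy : ContinuousOn y (Icc a b)) (hβ : ContinuousOn β (Icc a b))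
    (hderiv : ∀ x ∈ Ioo a b, HasDerivAt y (y' x) x)
    (hineq : ∀ x ∈ Ioo a b, β x * y x ≤ y' x) (ha : 0 ≤ y a) : 0 ≤ y b := by
  set B := fun x => ∫ t in a..x, β t
  have hB : ContinuousOn B (Icc a b) := by
    have := intervalIntegral.continuousOn_primitive_interval (μ := volume) (f := β) (a := a)
      (b := b) (by rw [uIcc_of_le hab]; exact hβ.integrableOn_Icc)
    rwa [uIcc_of_le hab] at this
  have hB' : ∀ x ∈ Ioo a b, HasDerivAt B (β x) x := fun x hx =>
    intervalIntegral.integral_hasDerivAt_right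
      ((hβ.mono (Icc_subset_Icc_right hx.2.le)).intervalIntegrable_of_Icc hx.1.le)
      (hβ.mono Ioo_subset_Icc_self |>.stronglyMeasurableAtFilter isOpen_Ioo x hx)
      (hβ.continuousAt (Icc_mem_nhds hx.1 hx.2))
  -- `y · exp (-∫ β)` is nondecreasing
  have hmono := le_of_hasDerivAt_nonneg (f := fun x => y x * exp (-B x)) hab
    (hy.mul hB.neg.rexp)
    (fun x hx => (hderiv x hx).mul (hB' x hx).neg.exp)
    (fun x hx => by
      have := mul_le_mul_of_nonneg_left (hineq x hx) (exp_pos (-B x)).le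
      simp only [Pi.neg_apply]
      linarith)
  have hBa : B a = 0 := intervalIntegral.integral_same
  simp only [hBa, neg_zero, exp_zero, mul_one] at hmono
  exact nonneg_of_mul_nonneg_left (ha.trans hmono) (exp_pos _)

theorem hasDerivAt_neg_rpow_const {x : ℝ} (hx : x < 0) (c : ℝ) :
    HasDerivAt (fun y : ℝ => (-y) ^ c) (-(c * (-x) ^ (c - 1))) x := by
  simpa [Function.comp_def] using
    (hasDerivAt_rpow_const (p := c) (Or.inl (neg_pos.2 hx).ne')).comp x (hasDerivAt_neg x)

theorem le_mul_rpow_of_neg_mul_deriv_le {f f' : ℝ → ℝ} {a z c : ℝ} (haz : a ≤ z) (hz : z < 0)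
    (hf : ContinuousOn f (Icc a z)) (hderiv : ∀ x ∈ Ioo a z, HasDerivAt f (f' x) x)
    (hgrowth : ∀ x ∈ Ioo a z, -x * f' x ≤ c * f x) :
    f z ≤ f a * (-a) ^ c * (-z) ^ (-c) := by
  have hneg : ∀ x ∈ Icc a z, 0 < -x := fun x hx => neg_pos.2 (hx.2.trans_lt hz)
  have hanti := le_of_hasDerivAt_nonneg (f := fun x => -(f x * (-x) ^ c)) haz
    (hf.mul (continuousOn_id.neg.rpow_const fun x hx => Or.inl (hneg x hx).ne')).neg
    (fun x hx => ((hderiv x hx).mul (hasDerivAt_neg_rpow_const (hx.2.trans hz) c)).neg)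
    (fun x hx => by
      have hx0 := hneg x (Ioo_subset_Icc_self hx)
      rw [rpow_sub_one hx0.ne']
      have := mul_le_mul_of_nonneg_left (hgrowth x hx) (div_pos (rpow_pos_of_pos hx0 c) hx0).le
      have e : -(f' x * (-x) ^ c + f x * -(c * ((-x) ^ c / -x)))
          = (-x) ^ c / -x * (c * f x) - (-x) ^ c / -x * (-x * f' x) := by
        field_simp [(neg_pos.1 hx0).ne]
        ring
      linarith)
  have hz0 := hneg z (right_mem_Icc.2 haz)
  rw [rpow_neg hz0.le, ← div_eq_mul_inv, le_div_iff₀ (rpow_pos_of_pos hz0 c)]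
  simpa using hanti

namespace SSS

variable {k : ℝ} {r ν lam Ω m ψ : ℝ → ℝ}

/-- The value of `λ′` given by (2) and (10); unlike `deriv lam` it is continuous up to `ẑ = -1`. -/
noncomputable def lamDeriv (k : ℝ) (r lam ψ : ℝ → ℝ) (z : ℝ) : ℝ :=
  -(r z * ψ z ^ 2 + 2 * k * lam z * ψ z + k ^ 2 * lam z / z)

theorem hasDerivAt_r (h : SSS k r ν lam Ω m ψ) {z : ℝ} (hz : z ∈ Ioo (-1 : ℝ) 0) :
    HasDerivAt r (lam z) z := by
  simpa [h.eq1 z hz] using (h.diff_r z hz).hasDerivAt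

theorem hasDerivAt_lam (h : SSS k r ν lam Ω m ψ) {z : ℝ} (hz : z ∈ Ioo (-1 : ℝ) 0) :
    HasDerivAt lam (lamDeriv k r lam ψ z) z := by
  have hrz : r z * z ≠ 0 := mul_ne_zero (h.r_pos z hz).ne' hz.2.ne
  have hval : deriv lam z = lamDeriv k r lam ψ z := mul_left_cancel₀ hrz <| by
    rw [lamDeriv]
    field_simp [hz.2.ne]
    linear_combination h.eq2 z hz - h.alg10 z hz
  exact hval ▸ (h.diff_lam z hz).hasDerivAt

theorem hasDerivAt_ψ (h : SSS k r ν lam Ω m ψ) {z : ℝ} (hz : z ∈ Ioo (-1 : ℝ) 0) :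
    HasDerivAt ψ (-(lam z * (2 * ψ z + k / z)) / r z) z := by
  have hrz : r z * z ≠ 0 := mul_ne_zero (h.r_pos z hz).ne' hz.2.ne
  have hval : deriv ψ z = -(lam z * (2 * ψ z + k / z)) / r z := mul_left_cancel₀ hrz <| by
    field_simp [hz.2.ne, (h.r_pos z hz).ne']
    linear_combination h.eq6 z hz
  exact hval ▸ (h.diff_ψ z hz).hasDerivAt

theorem continuousOn_lamDeriv (h : SSS k r ν lam Ω m ψ) :
    ContinuousOn (lamDeriv k r lam ψ) (Ico (-1 : ℝ) 0) := by
  have hz : ∀ z ∈ Ico (-1 : ℝ) 0, z ≠ 0 := fun z hz => hz.2.ne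
  unfold lamDeriv
  have := h.cont_r; have := h.cont_lam; have := h.cont_ψ
  fun_prop (disch := assumption)

theorem hasDerivAt_sq_mul_lamDeriv (h : SSS k r ν lam Ω m ψ) {z : ℝ}
    (hz : z ∈ Ioo (-1 : ℝ) 0) :
    HasDerivAt (fun x => r x ^ 2 * lamDeriv k r lam ψ x)
      (r z ^ 2 * lam z * (k + z * ψ z) ^ 2 / z ^ 2
        - (2 * k * ψ z + k ^ 2 / z) * (r z ^ 2 * lamDeriv k r lam ψ z)) z := by
  have hr := h.hasDerivAt_r hz
  have hl := h.hasDerivAt_lam hz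
  have hψ := h.hasDerivAt_ψ hz
  have := (hr.pow 2).mul ((((hr.mul (hψ.pow 2)).add ((hl.const_mul (2 * k)).mul hψ)).add
    ((hl.const_mul (k ^ 2)).div (hasDerivAt_id z) hz.2.ne)).neg)
  refine this.congr_deriv ?_
  simp only [lamDeriv, id, Pi.pow_apply, Pi.mul_apply, Pi.add_apply, Pi.neg_apply, Pi.div_apply]
  field_simp [(h.r_pos z hz).ne', hz.2.ne]
  ring

theorem sq_mul_lamDeriv_nonneg (h : SSS k r ν lam Ω m ψ) {c : ℝ} (hc : c ∈ Ico (-1 : ℝ) 0)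
    (hlam : ∀ x ∈ Ioo (-1 : ℝ) c, 0 ≤ lam x) : 0 ≤ r c ^ 2 * lamDeriv k r lam ψ c := by
  have hsub : Icc (-1 : ℝ) c ⊆ Ico (-1 : ℝ) 0 := Icc_subset_Ico_right hc.2
  have hIoo : ∀ x ∈ Ioo (-1 : ℝ) c, x ∈ Ioo (-1 : ℝ) 0 := fun x hx => ⟨hx.1, hx.2.trans hc.2⟩
  refine nonneg_of_hasDerivAt_ge_mul (y := fun x => r x ^ 2 * lamDeriv k r lam ψ x)
    (β := fun x => -(2 * k * ψ x + k ^ 2 / x)) hc.1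
    ((h.cont_r.pow 2).mul h.continuousOn_lamDeriv |>.mono hsub) ?_
    (fun x hx => h.hasDerivAt_sq_mul_lamDeriv (hIoo x hx)) (fun x hx => ?_) (by simp [h.init_r])
  · have := h.cont_ψ.mono hsub
    have : ∀ x ∈ Icc (-1 : ℝ) c, x ≠ 0 := fun x hx => (hsub hx).2.ne
    fun_prop (disch := assumption)
  · have := hlam x hx
    have : 0 ≤ r x ^ 2 * lam x * (k + x * ψ x) ^ 2 / x ^ 2 := by positivity
    linarith

theorem one_half_le_lam_of_pos (h : SSS k r ν lam Ω m ψ) {c : ℝ} (hc : c ∈ Ico (-1 : ℝ) 0)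
    (hlam : ∀ x ∈ Ioo (-1 : ℝ) c, 0 < lam x) : 1 / 2 ≤ lam c := by
  have hIoo : ∀ x ∈ Ioo (-1 : ℝ) c, x ∈ Ioo (-1 : ℝ) 0 := fun x hx => ⟨hx.1, hx.2.trans hc.2⟩
  refine h.init_lam ▸ le_of_hasDerivAt_nonneg hc.1 (h.cont_lam.mono (Icc_subset_Ico_right hc.2))
    (fun x hx => h.hasDerivAt_lam (hIoo x hx)) fun x hx => ?_
  have hx0 := hIoo x hx
  have := h.sq_mul_lamDeriv_nonneg ⟨hx0.1.le, hx0.2⟩ fun y hy => (hlam y ⟨hy.1, hy.2.trans hx.2⟩).le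
  exact nonneg_of_mul_nonneg_right (by linarith) (pow_pos (h.r_pos x hx0) 2)

theorem lam_pos (h : SSS k r ν lam Ω m ψ) {z : ℝ} (hz : z ∈ Ico (-1 : ℝ) 0) : 0 < lam z :=
  h.cont_lam.forall_pos_of_forall_Ioo_pos
    (fun _ hc hpos => one_half_pos.trans_le (h.one_half_le_lam_of_pos hc hpos)) z hz

theorem one_half_le_lam (h : SSS k r ν lam Ω m ψ) {z : ℝ} (hz : z ∈ Ico (-1 : ℝ) 0) :
    1 / 2 ≤ lam z :=
  h.one_half_le_lam_of_pos hz fun _ hx => h.lam_pos ⟨hx.1.le, hx.2.trans hz.2⟩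

theorem hasDerivAt_r_sq_mul_zψ_add (h : SSS k r ν lam Ω m ψ) {z : ℝ} (hz : z ∈ Ioo (-1 : ℝ) 0) :
    HasDerivAt (fun x => r x ^ 2 * (x * ψ x + k / 2)) (r z ^ 2 * ψ z) z := by
  have hW := ((hasDerivAt_id z).mul (h.hasDerivAt_ψ hz)).add_const (k / 2)
  refine (((h.hasDerivAt_r hz).pow 2).mul hW).congr_deriv ?_
  simp only [id, Pi.pow_apply, Pi.mul_apply]
  field_simp [(h.r_pos z hz).ne', hz.2.ne]
  ring

theorem k_div_two_le_ψ_of_pos (h : SSS k r ν lam Ω m ψ) {c : ℝ} (hc : c ∈ Ico (-1 : ℝ) 0)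
    (hψ : ∀ x ∈ Ioo (-1 : ℝ) c, 0 < ψ x) : k / 2 ≤ ψ c := by
  have hIoo : ∀ x ∈ Ioo (-1 : ℝ) c, x ∈ Ioo (-1 : ℝ) 0 := fun x hx => ⟨hx.1, hx.2.trans hc.2⟩
  refine h.init_ψ ▸ le_of_hasDerivAt_nonneg hc.1 (h.cont_ψ.mono (Icc_subset_Ico_right hc.2))
    (fun x hx => h.hasDerivAt_ψ (hIoo x hx)) fun x hx => ?_
  have hx0 := hIoo x hx
  have hW : 0 ≤ r x ^ 2 * (x * ψ x + k / 2) := by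
    have := le_of_hasDerivAt_nonneg (f := fun x => r x ^ 2 * (x * ψ x + k / 2)) hx.1.le
      (((h.cont_r.pow 2).mul ((continuousOn_id.mul h.cont_ψ).add continuousOn_const)).mono
        (Icc_subset_Ico_right hx0.2))
      (fun y hy => h.hasDerivAt_r_sq_mul_zψ_add ⟨hy.1, hy.2.trans hx0.2⟩)
      (fun y hy => mul_nonneg (sq_nonneg _) (hψ y ⟨hy.1, hy.2.trans hx.2⟩).le)
    simpa [h.init_r] using this
  have hr := h.r_pos x hx0
  have hW' : 0 ≤ x * ψ x + k / 2 := nonneg_of_mul_nonneg_right hW (by positivity)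
  have : -(lam x * (2 * ψ x + k / x)) = lam x * (-2 / x) * (x * ψ x + k / 2) := by
    field_simp [hx0.2.ne]
  rw [this]
  have : 0 ≤ -2 / x := div_nonneg_of_nonpos (by norm_num) hx0.2.le
  have := h.lam_pos ⟨hx0.1.le, hx0.2⟩
  positivity

theorem k_div_two_le_ψ (h : SSS k r ν lam Ω m ψ) {z : ℝ} (hz : z ∈ Ico (-1 : ℝ) 0) :
    k / 2 ≤ ψ z := by
  have hψ : ∀ x ∈ Ico (-1 : ℝ) 0, 0 < ψ x :=
    h.cont_ψ.forall_pos_of_forall_Ioo_pos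
      fun _ hc hpos => (half_pos h.k_pos).trans_le (h.k_div_two_le_ψ_of_pos hc hpos)
  exact h.k_div_two_le_ψ_of_pos hz fun x hx => hψ x ⟨hx.1.le, hx.2.trans hz.2⟩

theorem neg_mul_lamDeriv {z : ℝ} (hz : z ≠ 0) :
    -z * lamDeriv k r lam ψ z = z * r z * ψ z ^ 2 + lam z * (2 * k * z * ψ z + k ^ 2) := by
  rw [lamDeriv]
  field_simp
  ring

theorem two_mul_mul_ψ_nonpos (h : SSS k r ν lam Ω m ψ) {z : ℝ} (hz : z ∈ Ioo (-1 : ℝ) 0) :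
    2 * k * z * ψ z ≤ 0 := by
  have := h.k_pos
  have : 0 < ψ z := by linarith [h.k_div_two_le_ψ ⟨hz.1.le, hz.2⟩]
  have : 0 < 2 * k * ψ z := by positivity
  nlinarith [hz.2]

theorem lam_le (h : SSS k r ν lam Ω m ψ) {z : ℝ} (hz : z ∈ Ico (-1 : ℝ) 0) :
    lam z ≤ 1 / 2 * (-z) ^ (-(k ^ 2)) := by
  have := le_mul_rpow_of_neg_mul_deriv_le hz.1 hz.2 (h.cont_lam.mono (Icc_subset_Ico_right hz.2))
    (fun x hx => h.hasDerivAt_lam ⟨hx.1, hx.2.trans hz.2⟩) (c := k ^ 2) fun x hx => by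
      have hx0 : x ∈ Ioo (-1 : ℝ) 0 := ⟨hx.1, hx.2.trans hz.2⟩
      rw [neg_mul_lamDeriv hx0.2.ne]
      have : x * r x * ψ x ^ 2 ≤ 0 :=
        mul_nonpos_of_nonpos_of_nonneg (mul_nonpos_of_nonpos_of_nonneg hx0.2.le (h.r_pos x hx0).le)
          (sq_nonneg _)
      nlinarith [mul_nonpos_of_nonneg_of_nonpos (h.lam_pos ⟨hx.1.le, hx0.2⟩).le
        (h.two_mul_mul_ψ_nonpos hx0)]
  simpa [h.init_lam] using this

theorem r_lower (h : SSS k r ν lam Ω m ψ) {z : ℝ} (hz : z ∈ Ico (-1 : ℝ) 0) :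
    1 / 2 * (1 - -z) ≤ r z := by
  have := le_of_hasDerivAt_nonneg (f := fun x => r x - 1 / 2 * (1 + x)) hz.1
    ((h.cont_r.mono (Icc_subset_Ico_right hz.2)).sub (by fun_prop))
    (fun x hx => (h.hasDerivAt_r ⟨hx.1, hx.2.trans hz.2⟩).sub
      (((hasDerivAt_id x).const_add 1).const_mul (1 / 2)))
    (fun x hx => by
      have := h.one_half_le_lam ⟨hx.1.le, hx.2.trans hz.2⟩
      linarith)
  simp only [h.init_r] at this
  linarith

theorem r_upper (h : SSS k r ν lam Ω m ψ) {z : ℝ} (hz : z ∈ Ico (-1 : ℝ) 0) :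
    r z ≤ 1 / (2 * (1 - k ^ 2)) * (1 - (-z) ^ (1 - k ^ 2)) := by
  have hq : 0 < 1 - k ^ 2 := by linarith [h.k_small]
  have := le_of_hasDerivAt_nonneg
    (f := fun x => 1 / (2 * (1 - k ^ 2)) * (1 - (-x) ^ (1 - k ^ 2)) - r x) hz.1
    ((continuousOn_const.mul (continuousOn_const.sub
      (continuousOn_id.neg.rpow_const fun _ _ => Or.inr hq.le))).sub
      (h.cont_r.mono (Icc_subset_Ico_right hz.2)))
    (fun x hx => (((hasDerivAt_neg_rpow_const (hx.2.trans hz.2) _).const_sub 1).const_mul _).sub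
      (h.hasDerivAt_r ⟨hx.1, hx.2.trans hz.2⟩))
    (fun x hx => by
      have := h.lam_le ⟨hx.1.le, hx.2.trans hz.2⟩
      rw [show 1 - k ^ 2 - 1 = -(k ^ 2) by ring]
      field_simp
      linarith)
  simp only [h.init_r, neg_neg, one_rpow] at this
  linarith

theorem ν_le (h : SSS k r ν lam Ω m ψ) {z : ℝ} (hz : z ∈ Ico (-1 : ℝ) 0) : ν z ≤ -(1 / 2) := by
  rcases hz.1.eq_or_lt with rfl | hz1
  · exact h.init_ν.le
  · have := h.alg9 z ⟨hz1, hz.2⟩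
    have := h.r_lower hz
    have := mul_le_mul_of_nonpos_left (h.one_half_le_lam hz) hz.2.le
    linarith

theorem two_mul_lam_mul_deriv_Ω (h : SSS k r ν lam Ω m ψ) {z : ℝ} (hz : z ∈ Ioo (-1 : ℝ) 0) :
    2 * lam z * deriv Ω z = Ω z * (lamDeriv k r lam ψ z + r z * ψ z ^ 2) := by
  rw [← (h.hasDerivAt_lam hz).deriv, ← h.eq5 z hz]
  field_simp [(h.Ω_pos z hz).ne']

theorem one_le_Ω_sq (h : SSS k r ν lam Ω m ψ) {z : ℝ} (hz : z ∈ Ico (-1 : ℝ) 0) :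
    1 ≤ Ω z ^ 2 := by
  have hsub : Icc (-1 : ℝ) z ⊆ Ico (-1) 0 := Icc_subset_Ico_right hz.2
  have hlam : ∀ x ∈ Icc (-1 : ℝ) z, lam x ≠ 0 := fun x hx => (h.lam_pos (hsub hx)).ne'
  have := le_of_hasDerivAt_nonneg (f := fun x => Ω x ^ 2 / lam x) hz.1
    (((h.cont_Ω.mono hsub).pow 2).div (h.cont_lam.mono hsub) hlam)
    (fun x hx => ((h.diff_Ω x ⟨hx.1, hx.2.trans hz.2⟩).hasDerivAt.pow 2).div
      (h.hasDerivAt_lam ⟨hx.1, hx.2.trans hz.2⟩) (hlam x (Ioo_subset_Icc_self hx)))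
    (fun x hx => by
      have hx0 : x ∈ Ioo (-1 : ℝ) 0 := ⟨hx.1, hx.2.trans hz.2⟩
      have hΩ := h.two_mul_lam_mul_deriv_Ω hx0
      have := h.r_pos x hx0
      have : (2 : ℕ) * Ω x ^ (2 - 1) * deriv Ω x * lam x - Ω x ^ 2 * lamDeriv k r lam ψ x
          = Ω x ^ 2 * r x * ψ x ^ 2 := by
        push_cast
        linear_combination Ω x * hΩ
      rw [Pi.pow_apply, this]
      positivity)
  simp only [h.init_Ω, h.init_lam] at this
  rw [le_div_iff₀ (h.lam_pos hz)] at this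
  linarith [h.one_half_le_lam hz]

theorem Ω_sq_le (h : SSS k r ν lam Ω m ψ) {z : ℝ} (hz : z ∈ Ico (-1 : ℝ) 0) :
    Ω z ^ 2 ≤ (-z) ^ (-(k ^ 2)) := by
  have := le_mul_rpow_of_neg_mul_deriv_le (f := fun x => Ω x ^ 2) hz.1 hz.2
    ((h.cont_Ω.mono (Icc_subset_Ico_right hz.2)).pow 2)
    (fun x hx => (h.diff_Ω x ⟨hx.1, hx.2.trans hz.2⟩).hasDerivAt.pow 2) (c := k ^ 2)
    fun x hx => by
      have hx0 : x ∈ Ioo (-1 : ℝ) 0 := ⟨hx.1, hx.2.trans hz.2⟩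
      have hlam := h.lam_pos ⟨hx.1.le, hx0.2⟩
      have hΛ := neg_mul_lamDeriv (k := k) (r := r) (lam := lam) (ψ := ψ) hx0.2.ne
      have hmul : lam x * (-x * ((2 : ℕ) * Ω x ^ (2 - 1) * deriv Ω x))
          = lam x * (Ω x ^ 2 * (2 * k * x * ψ x + k ^ 2)) := by
        push_cast
        linear_combination (-x * Ω x) * h.two_mul_lam_mul_deriv_Ω hx0 + Ω x ^ 2 * hΛ
      refine le_of_mul_le_mul_left ?_ hlam
      rw [hmul]
      nlinarith [mul_nonpos_of_nonneg_of_nonpos (mul_nonneg hlam.le (sq_nonneg (Ω x)))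
        (h.two_mul_mul_ψ_nonpos hx0)]
  simpa [h.init_Ω] using this

theorem one_sub_μ_nonneg (h : SSS k r ν lam Ω m ψ) {z : ℝ} (hz : z ∈ Ioo (-1 : ℝ) 0) :
    0 ≤ 1 - 2 * m z / r z := by
  have hΩ := h.Ω_pos z hz
  have : 1 - 2 * m z / r z = -(4 * ν z * lam z) / Ω z ^ 2 := by
    rw [h.alg11 z hz]
    field_simp [(h.r_pos z hz).ne']
    ring
  rw [this]
  have := h.ν_le ⟨hz.1.le, hz.2⟩
  have := h.lam_pos ⟨hz.1.le, hz.2⟩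
  apply div_nonneg _ (sq_nonneg _)
  nlinarith

theorem m_le_m_of_le (h : SSS k r ν lam Ω m ψ) {x y : ℝ} (hx : -1 ≤ x) (hxy : x ≤ y) (hy : y < 0) :
    m x ≤ m y :=
  le_of_hasDerivAt_nonneg hxy (h.cont_m.mono (Icc_subset_Ico hx hy))
    (fun t ht => (h.diff_m t ⟨hx.trans_lt ht.1, ht.2.trans hy⟩).hasDerivAt) fun t ht => by
      have ht0 : t ∈ Ioo (-1 : ℝ) 0 := ⟨hx.trans_lt ht.1, ht.2.trans hy⟩
      have := h.eq7 t ht0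
      have := mul_nonneg (mul_nonneg (h.one_sub_μ_nonneg ht0) (sq_nonneg (r t))) (sq_nonneg (ψ t))
      nlinarith [h.lam_pos ⟨ht0.1.le, ht0.2⟩]

theorem m_nonneg (h : SSS k r ν lam Ω m ψ) {z : ℝ} (hz : z ∈ Ico (-1 : ℝ) 0) : 0 ≤ m z :=
  h.init_m ▸ h.m_le_m_of_le le_rfl hz.1 hz.2

theorem m_le (h : SSS k r ν lam Ω m ψ)
    (hμ : Tendsto (fun z => 2 * m z / r z) (𝓝[<] 0) (𝓝 (k ^ 2 / (1 + k ^ 2))))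
    {z : ℝ} (hz : z ∈ Ico (-1 : ℝ) 0) : m z ≤ k ^ 2 := by
  have hq : 0 < 1 - k ^ 2 := by linarith [h.k_small]
  have hK : 0 < k ^ 2 / (1 + k ^ 2) := by have := h.k_pos; positivity
  obtain ⟨y, hμy, hy⟩ := ((hμ.eventually_lt_const (lt_two_mul_self hK)).and
    (Ioo_mem_nhdsLT hz.2)).exists
  have hy0 : y ∈ Ioo (-1 : ℝ) 0 := ⟨hz.1.trans_lt hy.1, hy.2⟩
  have hr := h.r_pos y hy0
  have hry : r y ≤ 1 / (2 * (1 - k ^ 2)) := by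
    have := h.r_upper ⟨hy0.1.le, hy0.2⟩
    have := rpow_nonneg (neg_nonneg.2 hy0.2.le) (1 - k ^ 2)
    have : 0 < 1 / (2 * (1 - k ^ 2)) := by positivity
    nlinarith
  calc m z ≤ m y := h.m_le_m_of_le hz.1 hy.1.le hy.2
    _ = 2 * m y / r y * r y / 2 := by field_simp
    _ ≤ 2 * (k ^ 2 / (1 + k ^ 2)) * (1 / (2 * (1 - k ^ 2))) / 2 := by gcongr
    _ = k ^ 2 / (2 * ((1 + k ^ 2) * (1 - k ^ 2))) := by field_simp
    _ ≤ k ^ 2 := div_le_self (sq_nonneg k) (by nlinarith [h.k_small, sq_nonneg k])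

end SSS

/-- Soft bounds on the self-similar background quantities, assuming the
limiting mass-ratio value `μ → k²/(1+k²)` at `ẑ → 0⁻`:
`ν ≤ −1/2`, `1/2 ≤ λ ≤ (1/2)|ẑ|^{−k²}`,
`(1/2)(1−|ẑ|) ≤ r ≤ (1/(2q_k))(1−|ẑ|^{q_k})`, `1 ≤ Ω² ≤ |ẑ|^{−k²}`, and
`0 ≤ m ≤ k²`, on `[-1,0)` (with `q_k = 1 − k²`, `|ẑ| = −ẑ`). -/
theorem stmt13 (k : ℝ) (r ν lam Ω m ψ : ℝ → ℝ) (h : SSS k r ν lam Ω m ψ)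
    (hμ : Filter.Tendsto (fun z => 2 * m z / r z)
      (nhdsWithin 0 (Set.Iio (0 : ℝ))) (nhds (k ^ 2 / (1 + k ^ 2)))) :
    ∀ z ∈ Set.Ico (-1 : ℝ) 0,
      ν z ≤ -(1/2) ∧
      (1/2 ≤ lam z ∧ lam z ≤ (1/2) * (-z) ^ (-(k ^ 2))) ∧
      ((1/2) * (1 - (-z)) ≤ r z ∧
        r z ≤ (1 / (2 * (1 - k ^ 2))) * (1 - (-z) ^ (1 - k ^ 2))) ∧
      (1 ≤ Ω z ^ 2 ∧ Ω z ^ 2 ≤ (-z) ^ (-(k ^ 2))) ∧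
      (0 ≤ m z ∧ m z ≤ k ^ 2) := fun _ hz =>
  ⟨h.ν_le hz, ⟨h.one_half_le_lam hz, h.lam_le hz⟩, ⟨h.r_lower hz, h.r_upper hz⟩,
    ⟨h.one_le_Ω_sq hz, h.Ω_sq_le hz⟩, h.m_nonneg hz, h.m_le hμ hz⟩
end

section
/- Assume the self-similar ODE system. Then 0 ≤ ψ(ẑ) ≤ k for every ẑ ∈ [-1,-1/2]. -/
open Real Set Filter

/-! The axis data give `r(-1) = 0`, so any product `r² f` vanishes at `ẑ = -1`; the equation for
`ψ` makes `(r² ψ)' = -kλr/ẑ` and `(r² (k - ψ))' = kλr (2ẑ + 1)/ẑ`, both nonnegative on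
`(-1, -1/2]` once `λ > 0`. Positivity of `λ` holds because at a zero of `λ` the constraint
`Ω²/4 + νλ = r² ẑ ψ² + …` would force `Ω² ≤ 0`. -/

theorem ContinuousOn.pos_of_ne_zero_Ioo {f : ℝ → ℝ} {a b : ℝ} (hf : ContinuousOn f (Ico a b))
    (ha : 0 < f a) (hne : ∀ x ∈ Ioo a b, f x ≠ 0) : ∀ x ∈ Ico a b, 0 < f x := by
  intro x hx
  by_contra! hle
  have hab : a ∈ Ico a b := ⟨le_rfl, hx.1.trans_lt hx.2⟩
  obtain ⟨c, hc, hc0⟩ :=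
    isPreconnected_Ico.intermediate_value hx hab hf ⟨hle, ha.le⟩
  rcases hc.1.eq_or_lt with rfl | hac
  · exact ha.ne' hc0
  · exact hne c ⟨hac, hc.2⟩ hc0

theorem nonneg_of_hasDerivAt_nonneg {F F' : ℝ → ℝ} {a b : ℝ} (hab : a ≤ b)
    (hF : ContinuousOn F (Icc a b)) (hFa : 0 ≤ F a)
    (hderiv : ∀ x ∈ Ioo a b, HasDerivAt F (F' x) x) (hF' : ∀ x ∈ Ioo a b, 0 ≤ F' x) :
    0 ≤ F b := by
  have hmono : MonotoneOn F (Icc a b) := by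
    refine monotoneOn_of_hasDerivWithinAt_nonneg (f' := F') (convex_Icc a b) hF ?_ ?_ <;>
      rw [interior_Icc]
    · exact fun x hx => (hderiv x hx).hasDerivWithinAt
    · exact hF'
  exact hFa.trans (hmono (left_mem_Icc.2 hab) (right_mem_Icc.2 hab) hab)

namespace SSS

variable {k : ℝ} {r ν lam Ω m ψ : ℝ → ℝ} (h : SSS k r ν lam Ω m ψ)
include h

theorem lam_ne_zero {z : ℝ} (hz : z ∈ Ioo (-1) 0) : lam z ≠ 0 := by
  intro hlam
  have hconstraint := h.alg10 z hz
  rw [hlam] at hconstraint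
  nlinarith [sq_nonneg (r z * ψ z), hz.2, pow_pos (h.Ω_pos z hz) 2]

theorem lam_pos_s15 {z : ℝ} (hz : z ∈ Ioo (-1) 0) : 0 < lam z :=
  ContinuousOn.pos_of_ne_zero_Ioo h.cont_lam (by rw [h.init_lam]; norm_num)
    (fun _ hx => h.lam_ne_zero hx) z ⟨hz.1.le, hz.2⟩

theorem hasDerivAt_r_s15 {z : ℝ} (hz : z ∈ Ioo (-1) 0) : HasDerivAt r (lam z) z :=
  h.eq1 z hz ▸ (h.diff_r z hz).hasDerivAt

theorem hasDerivAt_r_sq_mul_ψ {z : ℝ} (hz : z ∈ Ioo (-1) 0) :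
    HasDerivAt (fun x => r x ^ 2 * ψ x) (-(k * lam z * r z / z)) z := by
  refine (((h.hasDerivAt_r_s15 hz).fun_pow 2).fun_mul (h.diff_ψ z hz).hasDerivAt).congr_deriv ?_
  have hz0 : z ≠ 0 := hz.2.ne
  field_simp
  linear_combination r z * h.eq6 z hz

theorem hasDerivAt_r_sq_mul_k_sub_ψ {z : ℝ} (hz : z ∈ Ioo (-1) 0) :
    HasDerivAt (fun x => r x ^ 2 * (k - ψ x)) (k * lam z * r z * (2 * z + 1) / z) z := by
  have hk : HasDerivAt (fun x => k * r x ^ 2) (k * (2 * r z * lam z)) z := by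
    simpa using ((h.hasDerivAt_r_s15 hz).fun_pow 2).const_mul k
  refine (hk.fun_sub (h.hasDerivAt_r_sq_mul_ψ hz)).congr_deriv ?_ |>.congr_of_eventuallyEq ?_
  · field_simp [hz.2.ne]
    ring
  · exact Eventually.of_forall fun x => by ring

theorem nonneg_of_deriv_r_sq_mul_nonneg {f f' : ℝ → ℝ} (hf : ContinuousOn f (Ico (-1) 0))
    {b : ℝ} (hb : b ∈ Ioo (-1) 0)
    (hderiv : ∀ x ∈ Ioo (-1) b, HasDerivAt (fun x => r x ^ 2 * f x) (f' x) x)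
    (hf' : ∀ x ∈ Ioo (-1) b, 0 ≤ f' x) : 0 ≤ f b := by
  have hsub : Icc (-1) b ⊆ Ico (-1) 0 := Icc_subset_Ico_right hb.2
  have hprod : 0 ≤ r b ^ 2 * f b :=
    nonneg_of_hasDerivAt_nonneg (F := fun x => r x ^ 2 * f x) hb.1.le
      (((h.cont_r.mono hsub).pow 2).mul (hf.mono hsub))
      (by simp [h.init_r]) hderiv hf'
  exact nonneg_of_mul_nonneg_right hprod (pow_pos (h.r_pos b hb) 2)

end SSS

/-- Pointwise bound `0 ≤ ψ(ẑ) ≤ k` for `ẑ ∈ [-1,-1/2]`. -/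
theorem stmt15 (k : ℝ) (r ν lam Ω m ψ : ℝ → ℝ) (h : SSS k r ν lam Ω m ψ) :
    ∀ z ∈ Set.Icc (-1 : ℝ) (-(1/2)), 0 ≤ ψ z ∧ ψ z ≤ k := by
  intro b hb
  rcases hb.1.eq_or_lt with rfl | hb₁
  · have hk := h.k_pos
    rw [h.init_ψ]
    constructor <;> linarith
  have hb' : b ∈ Ioo (-1) 0 := ⟨hb₁, by linarith [hb.2]⟩
  have hsub {x : ℝ} (hx : x ∈ Ioo (-1) b) : x ∈ Ioo (-1) 0 := ⟨hx.1, hx.2.trans hb'.2⟩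
  have hklr {x : ℝ} (hx : x ∈ Ioo (-1) b) : 0 < k * lam x * r x :=
    mul_pos (mul_pos h.k_pos (h.lam_pos_s15 (hsub hx))) (h.r_pos x (hsub hx))
  constructor
  · refine h.nonneg_of_deriv_r_sq_mul_nonneg h.cont_ψ hb'
      (fun x hx => h.hasDerivAt_r_sq_mul_ψ (hsub hx)) fun x hx => ?_
    exact neg_nonneg.2 (div_nonpos_of_nonneg_of_nonpos (hklr hx).le (hsub hx).2.le)
  · refine sub_nonneg.1 <| h.nonneg_of_deriv_r_sq_mul_nonneg
      (continuousOn_const.sub h.cont_ψ) hb'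
      (fun x hx => h.hasDerivAt_r_sq_mul_k_sub_ψ (hsub hx)) fun x hx => ?_
    have hx2 : 2 * x + 1 ≤ 0 := by linarith [hx.2, hb.2]
    exact div_nonneg_of_nonpos (mul_nonpos_of_nonneg_of_nonpos (hklr hx).le hx2) (hsub hx).2.le
end
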